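/- Let f : ℝ^d → ℝ satisfy the SPB growth estimate with parameters R₁, R₂, m and let σ > 0. Set 𝔄 = 2^{2m−2} R₁ σ^m (m+d)^{m/2} + R₂, 𝔅 = 2^{2m−2} R₁ and ℭ = 2^{m−1} R₁. Then the Gaussian smoothing satisfies |f_σ(x) − f_σ(y)| ≤ (𝔄 + 𝔅‖x‖^m + ℭ‖y − x‖^m) ‖x − y‖ for all x, y ∈ ℝ^d. -/

import Mathlib

open MeasureTheory Filter Set
open scoped InnerProductSpace ENNReal Topology Real NNReal

/-- The standard Gaussian probability measure `N(0, I)` on `ℝ^d`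
(with density `(2π)^{-d/2} e^{-‖u‖²/2}`), realized as the product of `d`
standard one-dimensional Gaussians. -/
noncomputable def stdGaussian (d : ℕ) : Measure (EuclideanSpace ℝ (Fin d)) :=
  Measure.map (MeasurableEquiv.toLp 2 (Fin d → ℝ))
    (Measure.pi fun _ : Fin d => ProbabilityTheory.gaussianReal 0 1)

instance (d : ℕ) : IsProbabilityMeasure (stdGaussian d) :=
  Measure.isProbabilityMeasure_map (MeasurableEquiv.toLp 2 (Fin d → ℝ)).measurable.aemeasurable

/-- `f` satisfies the SPB growth estimate with parameters `R1, R2, m`: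
`|f x - f y| ≤ (2^{m-1} R₁ ‖x‖^m + 2^{m-1} R₁ ‖y-x‖^m + R₂) ‖x-y‖`. -/
def SPBGrowth {d : ℕ} (f : EuclideanSpace ℝ (Fin d) → ℝ) (R1 R2 : ℝ) (m : ℕ) : Prop :=
  ∀ x y : EuclideanSpace ℝ (Fin d),
    |f x - f y| ≤ ((2 : ℝ) ^ ((m : ℤ) - 1) * R1 * ‖x‖ ^ m
      + (2 : ℝ) ^ ((m : ℤ) - 1) * R1 * ‖y - x‖ ^ m + R2) * ‖x - y‖

/-- The Gaussian smoothing `f_σ(x) = E_{u ∼ N(0,I)}[f (x + σ u)]`. -/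
noncomputable def gsmooth {d : ℕ} (σ : ℝ) (f : EuclideanSpace ℝ (Fin d) → ℝ)
    (x : EuclideanSpace ℝ (Fin d)) : ℝ :=
  ∫ u, f (x + σ • u) ∂(stdGaussian d)

/-- The gradient of the Gaussian smoothing:
`∇f_σ(x) = σ⁻¹ E_{u ∼ N(0,I)}[f (x + σ u) u]`. -/
noncomputable def gsGrad {d : ℕ} (σ : ℝ) (f : EuclideanSpace ℝ (Fin d) → ℝ)
    (x : EuclideanSpace ℝ (Fin d)) : EuclideanSpace ℝ (Fin d) :=
  σ⁻¹ • ∫ u, f (x + σ • u) • u ∂(stdGaussian d)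

/-!
`f_σ x - f_σ y` is the Gaussian average of `f (x + σu) - f (y + σu)`, and the growth estimate
together with `‖x + σu‖^m ≤ 2^{m-1} (‖x‖^m + σ^m ‖u‖^m)` bounds this by `(A + B ‖u‖^m) ‖x - y‖`.
What remains is the moment bound `E ‖u‖^m ≤ (m + d)^{m/2}`. With `t = m / (2(m + d))` one has
`s^m ≤ ((m + d)/e)^{m/2} e^{t s²}` and `E e^{t ‖u‖²} = (1 - 2t)^{-d/2} = (1 + m/d)^{d/2} ≤ e^{m/2}`.
-/

-- From here on `stdGaussian E` (`E` a type) is Mathlib's measure, `stdGaussian d` the one above.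
open ProbabilityTheory Real

lemma rpow_le_mul_exp_mul {y p t : ℝ} (hy : 0 ≤ y) (hp : 0 < p) (ht : 0 < t) :
    y ^ p ≤ (p / (exp 1 * t)) ^ p * exp (t * y) := by
  have h : t * y / p ≤ exp (t * y / p - 1) := by linarith [add_one_le_exp (t * y / p - 1)]
  calc y ^ p = (p / t) ^ p * (t * y / p) ^ p := by
        rw [← mul_rpow (by positivity) (by positivity)]
        field_simp
    _ ≤ (p / t) ^ p * exp (t * y / p - 1) ^ p := by gcongr
    _ = (p / (exp 1 * t)) ^ p * exp (t * y) := by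
        rw [← exp_mul, sub_mul, div_mul_cancel₀ _ hp.ne', one_mul, exp_sub,
          div_rpow hp.le ht.le, div_rpow hp.le (by positivity), mul_rpow (exp_pos 1).le ht.le,
          exp_one_rpow]
        field_simp

lemma div_add_rpow_neg_half_le_exp {a b : ℝ} (ha : 0 ≤ a) (hb : 0 < b) :
    (b / (a + b)) ^ (-(b / 2)) ≤ exp (a / 2) := by
  have h : (a + b) / b ≤ exp (a / b) := by
    rw [add_div, div_self hb.ne']
    exact add_one_le_exp _
  calc (b / (a + b)) ^ (-(b / 2)) = ((a + b) / b) ^ (b / 2) := by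
        rw [rpow_neg (by positivity), ← inv_rpow (by positivity), inv_div]
    _ ≤ exp (a / b) ^ (b / 2) := by gcongr
    _ = exp (a / 2) := by
        rw [← exp_mul]
        field_simp

lemma integral_exp_mul_sq_gaussianReal {t : ℝ} (ht : t < 1 / 2) :
    ∫ x, exp (t * x ^ 2) ∂gaussianReal 0 1 = (1 - 2 * t) ^ (-(1 / 2 : ℝ)) := by
  have hpdf : ∀ x, gaussianPDFReal 0 1 x • exp (t * x ^ 2)
      = (√(2 * π))⁻¹ * exp (-(1 / 2 - t) * x ^ 2) := fun x => by
    simp only [gaussianPDFReal, NNReal.coe_one, mul_one, sub_zero, smul_eq_mul]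
    rw [mul_assoc, ← exp_add]
    congr 2
    ring
  rw [integral_gaussianReal_eq_integral_smul one_ne_zero]
  simp_rw [hpdf]
  rw [integral_const_mul, integral_gaussian, rpow_neg (by linarith), ← sqrt_eq_rpow,
    ← sqrt_inv, ← sqrt_mul' _ (div_nonneg pi_pos.le (by linarith)), ← sqrt_inv]
  congr 1
  field_simp

section StdGaussian

variable {ι : Type*} [Fintype ι]

lemma integral_exp_mul_norm_sq_stdGaussian {t : ℝ} (ht : t < 1 / 2) :
    ∫ u, exp (t * ‖u‖ ^ 2) ∂stdGaussian (EuclideanSpace ℝ ι)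
      = (1 - 2 * t) ^ (-(Fintype.card ι / 2 : ℝ)) := by
  have hprod : ∀ v : ι → ℝ, exp (t * ‖WithLp.toLp 2 v‖ ^ 2) = ∏ i, exp (t * v i ^ 2) := by
    intro v
    rw [EuclideanSpace.real_norm_sq_eq, Finset.mul_sum, exp_sum]
  rw [← map_pi_eq_stdGaussian, integral_map (by fun_prop) (by fun_prop)]
  simp_rw [hprod]
  rw [integral_fintype_prod_eq_pow (fun x => exp (t * x ^ 2)),
    integral_exp_mul_sq_gaussianReal ht, ← rpow_natCast, ← rpow_mul (by linarith)]
  congr 1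
  ring

lemma integrable_exp_mul_norm_sq_stdGaussian {t : ℝ} (ht : t < 1 / 2) :
    Integrable (fun u => exp (t * ‖u‖ ^ 2)) (stdGaussian (EuclideanSpace ℝ ι)) := by
  refine Integrable.of_integral_ne_zero ?_
  rw [integral_exp_mul_norm_sq_stdGaussian ht]
  exact (rpow_pos_of_pos (by linarith) _).ne'

lemma integrable_norm_pow_stdGaussian (n : ℕ) :
    Integrable (fun u => ‖u‖ ^ n) (stdGaussian (EuclideanSpace ℝ ι)) :=
  (IsGaussian.memLp_id _ n (by simp)).integrable_norm_pow'

lemma integral_norm_pow_stdGaussian_le (m : ℕ) :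
    ∫ u, ‖u‖ ^ m ∂stdGaussian (EuclideanSpace ℝ ι)
      ≤ ((m : ℝ) + Fintype.card ι) ^ ((m : ℝ) / 2) := by
  rcases m.eq_zero_or_pos with rfl | hm
  · simp
  rcases isEmpty_or_nonempty ι with hι | hι
  · have h0 : ∀ u : EuclideanSpace ℝ ι, ‖u‖ ^ m = 0 := fun u => by
      simp [Subsingleton.elim u 0, hm.ne']
    simp_rw [h0, integral_zero]
    positivity
  set D : ℝ := (Fintype.card ι : ℝ)
  have hD : 0 < D := by positivity
  set t : ℝ := m / (2 * (m + D))
  have ht : t < 1 / 2 := by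
    rw [div_lt_iff₀ (by positivity)]
    linarith
  have hpt : ∀ u : EuclideanSpace ℝ ι,
      ‖u‖ ^ m ≤ ((m + D) / exp 1) ^ ((m : ℝ) / 2) * exp (t * ‖u‖ ^ 2) := fun u => by
    have hsq : ‖u‖ ^ m = (‖u‖ ^ 2) ^ ((m : ℝ) / 2) := by
      rw [← rpow_natCast_mul (norm_nonneg u), Nat.cast_ofNat, mul_div_cancel₀ _ two_ne_zero,
        rpow_natCast]
    rw [hsq]
    refine (rpow_le_mul_exp_mul (sq_nonneg ‖u‖) (by positivity) (by positivity : 0 < t)).trans_eq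
      ?_
    congr 2
    simp only [t]
    field_simp
  calc ∫ u, ‖u‖ ^ m ∂stdGaussian (EuclideanSpace ℝ ι)
      ≤ ∫ u, ((m + D) / exp 1) ^ ((m : ℝ) / 2) * exp (t * ‖u‖ ^ 2)
          ∂stdGaussian (EuclideanSpace ℝ ι) :=
        integral_mono (integrable_norm_pow_stdGaussian m)
          ((integrable_exp_mul_norm_sq_stdGaussian ht).const_mul _) hpt
    _ = (m + D) ^ ((m : ℝ) / 2) / exp (m / 2) * (D / (m + D)) ^ (-(D / 2)) := by
        rw [integral_const_mul, integral_exp_mul_norm_sq_stdGaussian ht,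
          div_rpow (by positivity) (exp_pos 1).le, exp_one_rpow]
        congr 3
        simp only [t]
        field_simp
        ring
    _ ≤ (m + D) ^ ((m : ℝ) / 2) / exp (m / 2) * exp (m / 2) := by
        gcongr
        exact div_add_rpow_neg_half_le_exp (Nat.cast_nonneg m) hD
    _ = (m + D) ^ ((m : ℝ) / 2) := div_mul_cancel₀ _ (exp_pos _).ne'

end StdGaussian

lemma stdGaussian_eq_stdGaussian_euclideanSpace (d : ℕ) :
    _root_.stdGaussian d = ProbabilityTheory.stdGaussian (EuclideanSpace ℝ (Fin d)) :=
  map_pi_eq_stdGaussian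

lemma add_pow_le_two_zpow_mul {a b : ℝ} (ha : 0 ≤ a) (hb : 0 ≤ b) (m : ℕ) :
    (a + b) ^ m ≤ 2 ^ ((m : ℤ) - 1) * (a ^ m + b ^ m) := by
  rcases m.eq_zero_or_pos with rfl | hm
  · norm_num
  · rw [show (m : ℤ) - 1 = ((m - 1 : ℕ) : ℤ) by omega, zpow_natCast]
    exact add_pow_le ha hb m

namespace SPBGrowth

variable {d : ℕ} {f : EuclideanSpace ℝ (Fin d) → ℝ} {R1 R2 : ℝ} {m : ℕ}

theorem continuous (hf : SPBGrowth f R1 R2 m) : Continuous f := by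
  refine continuous_iff_continuousAt.2 fun a => tendsto_iff_norm_sub_tendsto_zero.2 ?_
  have hg : Continuous fun y => ((2 : ℝ) ^ ((m : ℤ) - 1) * R1 * ‖a‖ ^ m
      + (2 : ℝ) ^ ((m : ℤ) - 1) * R1 * ‖y - a‖ ^ m + R2) * ‖a - y‖ := by fun_prop
  refine squeeze_zero (fun _ => norm_nonneg _) (fun y => ?_) (by simpa using hg.tendsto a)
  rw [Real.norm_eq_abs, abs_sub_comm]
  exact hf a y

theorem integrable_comp_add_smul (hf : SPBGrowth f R1 R2 m) (z : EuclideanSpace ℝ (Fin d))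
    (σ : ℝ) :
    Integrable (fun u => f (z + σ • u)) (stdGaussian (EuclideanSpace ℝ (Fin d))) := by
  set c := (2 : ℝ) ^ ((m : ℤ) - 1) * R1
  have hg := ((integrable_const (μ := stdGaussian (EuclideanSpace ℝ (Fin d))) |f z|).add
    ((integrable_norm_pow_stdGaussian 1).const_mul ((c * ‖z‖ ^ m + R2) * |σ|))).add
    ((integrable_norm_pow_stdGaussian (m + 1)).const_mul (c * |σ| ^ (m + 1)))
  refine hg.mono' (hf.continuous.comp (by fun_prop)).aestronglyMeasurable
    (ae_of_all _ fun u => ?_)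
  have h := hf z (z + σ • u)
  rw [sub_add_cancel_left, norm_neg, add_sub_cancel_left, norm_smul, Real.norm_eq_abs] at h
  calc ‖f (z + σ • u)‖ ≤ |f z| + |f z - f (z + σ • u)| := by
        rw [Real.norm_eq_abs, abs_sub_comm]
        linarith [abs_sub_abs_le_abs_sub (f (z + σ • u)) (f z)]
    _ ≤ |f z| + (c * ‖z‖ ^ m + c * (|σ| * ‖u‖) ^ m + R2) * (|σ| * ‖u‖) := by gcongr
    _ = _ := by
        simp only [Pi.add_apply]
        ring

theorem abs_sub_comp_add_le (hf : SPBGrowth f R1 R2 m) (hR1 : 0 ≤ R1)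
    (x y w : EuclideanSpace ℝ (Fin d)) :
    |f (x + w) - f (y + w)| ≤ ((2 : ℝ) ^ (2 * (m : ℤ) - 2) * R1 * (‖x‖ ^ m + ‖w‖ ^ m)
      + (2 : ℝ) ^ ((m : ℤ) - 1) * R1 * ‖y - x‖ ^ m + R2) * ‖x - y‖ := by
  have h := hf (x + w) (y + w)
  rw [add_sub_add_right_eq_sub, add_sub_add_right_eq_sub] at h
  have hxw : ‖x + w‖ ^ m ≤ 2 ^ ((m : ℤ) - 1) * (‖x‖ ^ m + ‖w‖ ^ m) :=
    (pow_le_pow_left₀ (norm_nonneg _) (norm_add_le x w) m).trans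
      (add_pow_le_two_zpow_mul (norm_nonneg _) (norm_nonneg _) m)
  have h2 : (2 : ℝ) ^ (2 * (m : ℤ) - 2) = 2 ^ ((m : ℤ) - 1) * 2 ^ ((m : ℤ) - 1) := by
    rw [← zpow_add₀ two_ne_zero]
    ring_nf
  calc |f (x + w) - f (y + w)|
      ≤ ((2 : ℝ) ^ ((m : ℤ) - 1) * R1 * (2 ^ ((m : ℤ) - 1) * (‖x‖ ^ m + ‖w‖ ^ m))
          + (2 : ℝ) ^ ((m : ℤ) - 1) * R1 * ‖y - x‖ ^ m + R2) * ‖x - y‖ := by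
        refine h.trans ?_
        gcongr
    _ = _ := by
        rw [h2]
        ring

end SPBGrowth

theorem gsmooth_growth_general {d : ℕ} (f : EuclideanSpace ℝ (Fin d) → ℝ)
    (R1 R2 : ℝ) (m : ℕ) (hR1 : 0 ≤ R1)
    (hf : SPBGrowth f R1 R2 m) (σ : ℝ) (hσ : 0 < σ) (x y : EuclideanSpace ℝ (Fin d)) :
    |gsmooth σ f x - gsmooth σ f y| ≤
      (((2 : ℝ) ^ (2 * (m : ℤ) - 2) * R1 * σ ^ m * ((m + d : ℕ) : ℝ) ^ ((m : ℝ) / 2) + R2)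
        + (2 : ℝ) ^ (2 * (m : ℤ) - 2) * R1 * ‖x‖ ^ m
        + (2 : ℝ) ^ ((m : ℤ) - 1) * R1 * ‖y - x‖ ^ m) * ‖x - y‖ := by
  have hx := hf.integrable_comp_add_smul x σ
  have hy := hf.integrable_comp_add_smul y σ
  set μ := stdGaussian (EuclideanSpace ℝ (Fin d))
  set A := ((2 : ℝ) ^ (2 * (m : ℤ) - 2) * R1 * ‖x‖ ^ m
    + (2 : ℝ) ^ ((m : ℤ) - 1) * R1 * ‖y - x‖ ^ m + R2) * ‖x - y‖
  set B := (2 : ℝ) ^ (2 * (m : ℤ) - 2) * R1 * σ ^ m * ‖x - y‖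
  have hpt : ∀ u, |f (x + σ • u) - f (y + σ • u)| ≤ A + B * ‖u‖ ^ m := fun u => by
    refine (hf.abs_sub_comp_add_le hR1 x y (σ • u)).trans_eq ?_
    rw [norm_smul, Real.norm_of_nonneg hσ.le, mul_pow]
    ring
  calc |gsmooth σ f x - gsmooth σ f y|
      = |∫ u, (f (x + σ • u) - f (y + σ • u)) ∂μ| := by
        rw [gsmooth, gsmooth, stdGaussian_eq_stdGaussian_euclideanSpace, integral_sub hx hy]
    _ ≤ ∫ u, |f (x + σ • u) - f (y + σ • u)| ∂μ := abs_integral_le_integral_abs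
    _ ≤ ∫ u, (A + B * ‖u‖ ^ m) ∂μ :=
        integral_mono (hx.sub hy).abs
          ((integrable_const A).add ((integrable_norm_pow_stdGaussian m).const_mul B)) hpt
    _ = A + B * ∫ u, ‖u‖ ^ m ∂μ := by
        rw [integral_add (integrable_const A) ((integrable_norm_pow_stdGaussian m).const_mul B),
          integral_const, integral_const_mul, probReal_univ, one_smul]
    _ ≤ A + B * ((m : ℝ) + d) ^ ((m : ℝ) / 2) := by
        gcongr
        simpa using integral_norm_pow_stdGaussian_le (ι := Fin d) m
    _ = _ := by
        push_cast
        ring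

/-- Theorem 3.5(i). Lipschitz-type growth bound for `f_σ`:
`|f_σ(x) - f_σ(y)| ≤ (𝔄 + 𝔅 ‖x‖^m + ℭ ‖y - x‖^m) ‖x - y‖` with
`𝔄 = 2^{2m-2} R₁ σ^m (m + d)^{m/2} + R₂`, `𝔅 = 2^{2m-2} R₁`, `ℭ = 2^{m-1} R₁`. -/
theorem gsmooth_growth {d : ℕ} (hd : 1 ≤ d) (f : EuclideanSpace ℝ (Fin d) → ℝ)
    (R1 R2 : ℝ) (m : ℕ) (hR1 : 0 ≤ R1) (hR2 : 0 < R2) (hR1m : R1 = 0 ↔ m = 0)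
    (hf : SPBGrowth f R1 R2 m) (σ : ℝ) (hσ : 0 < σ) (x y : EuclideanSpace ℝ (Fin d)) :
    |gsmooth σ f x - gsmooth σ f y| ≤
      (((2 : ℝ) ^ (2 * (m : ℤ) - 2) * R1 * σ ^ m * ((m + d : ℕ) : ℝ) ^ ((m : ℝ) / 2) + R2)
        + (2 : ℝ) ^ (2 * (m : ℤ) - 2) * R1 * ‖x‖ ^ m
        + (2 : ℝ) ^ ((m : ℤ) - 1) * R1 * ‖y - x‖ ^ m) * ‖x - y‖ :=
  gsmooth_growth_general f R1 R2 m hR1 hf σ hσ x y
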